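/- The cyclic unary semi-Peano algebras F/ω and F/ω′ are isomorphic if and only if the words ω and ω′ are conjugate in the free monoid F*. -/

import Mathlib

/-- The action of a word `w ∈ F*` on a unary algebra. -/
def wordAct {F U : Type*} (act : F → U → U) (w : List F) (x : U) : U :=
  w.foldr act x

/-- `wpow ω n` is the word `ωⁿ`. -/
def wpow {F : Type*} (ω : List F) (n : ℕ) : List F :=
  (List.replicate n ω).flatten

/-- One-step relation generating the congruence of `F/ω`: a word `φ` (read as
`φ(a₀)`) is identified with `φω` (read as `φ(ω(a₀))`). -/
def wstep {F : Type*} (ω : List F) (φ ψ : List F) : Prop :=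
  ψ = φ ++ ω

/-- `F/ω`: the free unary algebra on one generator `a₀` modulo the least closed
and balanced congruence identifying `a₀` with `ω(a₀)`. Concretely: words
`φ ∈ F*` (representing `φ(a₀)`) with `φ` identified with `φωⁿ`. -/
def FmodW {F : Type*} (ω : List F) : Type _ :=
  Quot (wstep ω)

/-- The class of the word `φ` in `F/ω`. -/
def FmodW.mk {F : Type*} (ω : List F) (φ : List F) : FmodW ω :=
  Quot.mk _ φ

/-- The canonical generator of `F/ω` (the class of `a₀`, i.e. of the empty word). -/
def FmodW.gen {F : Type*} (ω : List F) : FmodW ω :=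
  FmodW.mk ω []

/-- The unary operation `f` on `F/ω`, acting by prepending the letter `f`. -/
def FmodW.op {F : Type*} (ω : List F) (f : F) : FmodW ω → FmodW ω :=
  Quot.lift (fun φ => FmodW.mk ω (f :: φ))
    (fun φ ψ h => Quot.sound (show f :: ψ = (f :: φ) ++ ω by rw [h]; rfl))

/- ### Auxiliary lemmas -/

theorem wpow_zero {F : Type*} (ω : List F) : wpow ω 0 = [] := rfl

theorem wpow_succ {F : Type*} (ω : List F) (n : ℕ) : wpow ω (n+1) = ω ++ wpow ω n := by
  simp [wpow, List.replicate_succ]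

theorem wpow_add {F : Type*} (ω : List F) (m n : ℕ) :
    wpow ω (m+n) = wpow ω m ++ wpow ω n := by
  induction m with
  | zero => simp [wpow_zero]
  | succ k ih => rw [Nat.succ_add, wpow_succ, ih, wpow_succ, List.append_assoc]

theorem wpow_succ' {F : Type*} (ω : List F) (n : ℕ) : wpow ω (n+1) = wpow ω n ++ ω := by
  rw [wpow_add]; simp [wpow_succ, wpow_zero]

theorem length_wpow {F : Type*} (ω : List F) (n : ℕ) :
    (wpow ω n).length = n * ω.length := by
  induction n with
  | zero => simp [wpow_zero]
  | succ k ih => rw [wpow_succ]; simp [ih]; ring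

theorem FmodW.mk_append_wpow {F : Type*} (ω ψ : List F) (k : ℕ) :
    FmodW.mk ω (ψ ++ wpow ω k) = FmodW.mk ω ψ := by
  induction k with
  | zero => simp [wpow_zero]
  | succ k ih =>
      rw [wpow_succ', ← List.append_assoc]
      have := Quot.sound (r := wstep ω) (a := ψ ++ wpow ω k)
        (b := ψ ++ wpow ω k ++ ω) rfl
      exact this.symm.trans ih

/-- Characterization of equality in `F/ω`. -/
theorem FmodW.mk_eq_mk_iff {F : Type*} (ω φ ψ : List F) :
    FmodW.mk ω φ = FmodW.mk ω ψ ↔ ∃ m n, φ ++ wpow ω m = ψ ++ wpow ω n := by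
  constructor
  · intro h
    have h' := Quot.eq.mp h
    clear h
    induction h' with
    | rel a b hab => exact ⟨1, 0, by rw [hab]; simp [wpow_succ, wpow_zero]⟩
    | refl a => exact ⟨0, 0, rfl⟩
    | symm a b _ ih => obtain ⟨m, n, hh⟩ := ih; exact ⟨n, m, hh.symm⟩
    | trans a b c _ _ ih1 ih2 =>
        obtain ⟨m, n, hh1⟩ := ih1
        obtain ⟨p, q, hh2⟩ := ih2
        refine ⟨m + p, q + n, ?_⟩
        rw [wpow_add, wpow_add, ← List.append_assoc, ← List.append_assoc, hh1,
          List.append_assoc, ← wpow_add, Nat.add_comm n p, wpow_add,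
          ← List.append_assoc, hh2, List.append_assoc]
  · rintro ⟨m, n, h⟩
    rw [← FmodW.mk_append_wpow ω φ m, h, FmodW.mk_append_wpow]

/-- Key cancellation step. -/
theorem cancel_aux {F : Type*} {ω ω' φ : List F} {m n : ℕ} (hω : ω ≠ [])
    (h : φ ++ wpow ω' m = ω ++ (φ ++ wpow ω' n)) :
    ∃ t, 1 ≤ t ∧ ω ++ φ = φ ++ wpow ω' t ∧ ω.length = t * ω'.length := by
  have hlen := congrArg List.length h
  simp [length_wpow] at hlen
  have hω0 : 0 < ω.length := List.length_pos_iff.mpr hω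
  have hω'0 : 0 < ω'.length := by nlinarith
  have hmn : n < m := by nlinarith
  obtain ⟨t, ht⟩ : ∃ t, m = t + n := ⟨m - n, by omega⟩
  have ht1 : 1 ≤ t := by omega
  refine ⟨t, ht1, ?_, ?_⟩
  · have h2 : φ ++ wpow ω' t ++ wpow ω' n = (ω ++ φ) ++ wpow ω' n := by
      rw [List.append_assoc, ← wpow_add, ← ht, h, List.append_assoc]
    exact (List.append_cancel_right h2).symm
  · subst ht
    nlinarith [hlen]

/-- Word equivariance of an equivariant map. -/
theorem equivariant_words {F : Type*} {ω ω' : List F} (e : FmodW ω → FmodW ω')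
    (he : ∀ f x, e (FmodW.op ω f x) = FmodW.op ω' f (e x)) (φ : List F)
    (h0 : e (FmodW.gen ω) = FmodW.mk ω' φ) (ψ : List F) :
    e (FmodW.mk ω ψ) = FmodW.mk ω' (ψ ++ φ) := by
  induction ψ with
  | nil => exact h0
  | cons f ψ ih =>
      have h1 : FmodW.mk ω (f :: ψ) = FmodW.op ω f (FmodW.mk ω ψ) := rfl
      rw [h1, he, ih]
      rfl

/-- Conjugacy decomposition lemma (for nonempty `ω`). -/
theorem conj_decomp {F : Type*} :
    ∀ (N : ℕ) (φ ω ω' : List F), ω ≠ [] → φ.length ≤ N → ω ++ φ = φ ++ ω' →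
    ∃ χ k, ω' ++ χ = χ ++ ω ∧ φ ++ χ = wpow ω k ∧ χ ++ φ = wpow ω' k := by
  intro N
  induction N with
  | zero =>
      intro φ ω ω' hω hlen h
      have hφ : φ = [] := List.length_eq_zero_iff.mp (Nat.le_zero.mp hlen)
      subst hφ
      simp at h
      subst h
      exact ⟨ω, 1, rfl, by simp [wpow_succ, wpow_zero], by simp [wpow_succ, wpow_zero]⟩
  | succ N ih =>
      intro φ ω ω' hω hlen h
      rcases le_or_gt ω.length φ.length with hle | hlt
      · -- ω is a prefix of φ
        have hpre : ω <+: φ := by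
          have h1 : ω <+: ω ++ φ := List.prefix_append ω φ
          have h2 : φ <+: ω ++ φ := by rw [h]; exact List.prefix_append φ ω'
          exact List.prefix_of_prefix_length_le h1 h2 hle
        obtain ⟨ρ, hρ⟩ := hpre
        subst hρ
        have h' : ω ++ ρ = ρ ++ ω' := by
          apply List.append_cancel_left (as := ω)
          exact h.trans (List.append_assoc ω ρ ω')
        have hρlen : ρ.length ≤ N := by
          have hω0 : 0 < ω.length := List.length_pos_iff.mpr hω
          simp at hlen
          omega
        obtain ⟨χ, k, h1, h2, h3⟩ := ih ρ ω ω' hω hρlen h'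
        refine ⟨χ, k + 1, h1, ?_, ?_⟩
        · rw [List.append_assoc, h2, wpow_succ]
        · calc χ ++ (ω ++ ρ) = (χ ++ ω) ++ ρ := (List.append_assoc _ _ _).symm
            _ = (ω' ++ χ) ++ ρ := by rw [h1]
            _ = ω' ++ (χ ++ ρ) := List.append_assoc _ _ _
            _ = ω' ++ wpow ω' k := by rw [h3]
            _ = wpow ω' (k+1) := (wpow_succ _ _).symm
      · -- φ is a proper prefix of ω
        have hpre : φ <+: ω := by
          have h1 : φ <+: ω ++ φ := by rw [h]; exact List.prefix_append φ ω'
          have h2 : ω <+: ω ++ φ := List.prefix_append ω φ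
          exact List.prefix_of_prefix_length_le h1 h2 (le_of_lt hlt)
        obtain ⟨β, hβ⟩ := hpre
        subst hβ
        have hω' : ω' = β ++ φ := by
          apply List.append_cancel_left (as := φ)
          exact h.symm.trans (List.append_assoc φ β φ)
        refine ⟨β, 1, ?_, ?_, ?_⟩
        · rw [hω', List.append_assoc]
        · simp [wpow_succ, wpow_zero]
        · simp [wpow_succ, wpow_zero, hω']

/-- The cyclic unary semi-Peano algebras `F/ω` and `F/ω′` are isomorphic (as
unary algebras) if and only if the words `ω` and `ω′` are conjugate in the free
monoid `F*`. -/
theorem FmodW.iso_iff_conjugate {F : Type*} (ω ω' : List F) :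
    (∃ e : FmodW ω ≃ FmodW ω', ∀ f x, e (FmodW.op ω f x) = FmodW.op ω' f (e x))
    ↔ ∃ φ : List F, ω ++ φ = φ ++ ω' := by
  constructor
  · rintro ⟨e, he⟩
    obtain ⟨φ, hφ⟩ := Quot.exists_rep (e (FmodW.gen ω))
    have hφ' : e (FmodW.gen ω) = FmodW.mk ω' φ := hφ.symm
    obtain ⟨χ, hχ⟩ := Quot.exists_rep (e.symm (FmodW.gen ω'))
    have hχ' : e.symm (FmodW.gen ω') = FmodW.mk ω χ := hχ.symm
    have he' : ∀ f y, e.symm (FmodW.op ω' f y) = FmodW.op ω f (e.symm y) := by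
      intro f y
      have h1 : e (FmodW.op ω f (e.symm y)) = FmodW.op ω' f y := by
        rw [he, e.apply_symm_apply]
      rw [← h1, e.symm_apply_apply]
    have heq : FmodW.mk ω' φ = FmodW.mk ω' (ω ++ φ) := by
      rw [← hφ', ← equivariant_words e he φ hφ' ω]
      show e (FmodW.mk ω []) = _
      congr 1
      exact Quot.sound (show ω = [] ++ ω by simp)
    have heq' : FmodW.mk ω χ = FmodW.mk ω (ω' ++ χ) := by
      rw [← hχ', ← equivariant_words e.symm he' χ hχ' ω']
      show e.symm (FmodW.mk ω' []) = _
      congr 1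
      exact Quot.sound (show ω' = [] ++ ω' by simp)
    rcases eq_or_ne ω [] with hω | hω
    · -- then ω' = [] too
      obtain ⟨m, n, h1⟩ := (FmodW.mk_eq_mk_iff ω χ (ω' ++ χ)).mp heq'
      rw [hω] at h1
      simp [wpow] at h1
      have h2 := congrArg List.length h1
      simp at h2
      refine ⟨[], ?_⟩
      rw [hω, h2]
    rcases eq_or_ne ω' [] with hω'e | hω'e
    · obtain ⟨m, n, h1⟩ := (FmodW.mk_eq_mk_iff ω' φ (ω ++ φ)).mp heq
      rw [hω'e] at h1
      simp [wpow] at h1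
      have h2 := congrArg List.length h1
      simp at h2
      exact absurd h2 hω
    -- both nonempty
    obtain ⟨m, n, h1⟩ := (FmodW.mk_eq_mk_iff ω' φ (ω ++ φ)).mp heq
    rw [List.append_assoc] at h1
    obtain ⟨t, ht1, ht2, ht3⟩ := cancel_aux hω h1
    obtain ⟨p, q, h2⟩ := (FmodW.mk_eq_mk_iff ω χ (ω' ++ χ)).mp heq'
    rw [List.append_assoc] at h2
    obtain ⟨s, hs1, hs2, hs3⟩ := cancel_aux hω'e h2
    have hω0 : 0 < ω.length := List.length_pos_iff.mpr hω
    have hts : t = 1 := by nlinarith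
    subst hts
    refine ⟨φ, ?_⟩
    rw [ht2]
    congr 1
    simp [wpow_succ, wpow_zero]
  · rintro ⟨φ₀, hφ₀⟩
    -- reduce to the case where the decomposition lemma applies
    obtain ⟨φ, hφ, χ, k, h1, h2, h3⟩ :
        ∃ φ, ω ++ φ = φ ++ ω' ∧ ∃ χ k,
          ω' ++ χ = χ ++ ω ∧ φ ++ χ = wpow ω k ∧ χ ++ φ = wpow ω' k := by
      rcases eq_or_ne ω [] with hω | hω
      · have hω'e : ω' = [] := by
          rw [hω] at hφ₀
          simpa using hφ₀.symm
        exact ⟨[], by rw [hω, hω'e], [], 0, by rw [hω, hω'e], by simp [wpow_zero],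
          by simp [wpow_zero]⟩
      · exact ⟨φ₀, hφ₀, conj_decomp φ₀.length φ₀ ω ω' hω le_rfl hφ₀⟩
    refine ⟨⟨Quot.lift (fun ψ => FmodW.mk ω' (ψ ++ φ)) ?_,
             Quot.lift (fun ψ => FmodW.mk ω (ψ ++ χ)) ?_, ?_, ?_⟩, ?_⟩
    · intro a b hab
      subst hab
      show FmodW.mk ω' (a ++ φ) = FmodW.mk ω' ((a ++ ω) ++ φ)
      rw [List.append_assoc, hφ, ← List.append_assoc]
      exact Quot.sound rfl
    · intro a b hab
      subst hab
      show FmodW.mk ω (a ++ χ) = FmodW.mk ω ((a ++ ω') ++ χ)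
      rw [List.append_assoc, h1, ← List.append_assoc]
      exact Quot.sound rfl
    · intro x
      induction x using Quot.ind with
      | _ ψ =>
          show FmodW.mk ω ((ψ ++ φ) ++ χ) = FmodW.mk ω ψ
          rw [List.append_assoc, h2]
          exact FmodW.mk_append_wpow ω ψ k
    · intro x
      induction x using Quot.ind with
      | _ ψ =>
          show FmodW.mk ω' ((ψ ++ χ) ++ φ) = FmodW.mk ω' ψ
          rw [List.append_assoc, h3]
          exact FmodW.mk_append_wpow ω' ψ k
    · intro f x
      induction x using Quot.ind with
      | _ ψ => rfl
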